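/- arXiv:1712.09710 — 2 statements merged into one kernel-verified Lean document; each statement's English description precedes it below -/
import Mathlib

section
/- For every natural number n, the number of binary strings of length exactly n that are prefixes of some element of 𝕊 (the class of subsets of S = {0^{2^k} : k ∈ ℕ}, viewed as infinite binary sequences under the length-lexicographic identification of strings with positions) is at most n + 1. -/
/-- Positions (under the length-lexicographic identification of binary strings
with natural numbers) of the strings `0^{2^k}`: the string `0^l` is the
`(2^l - 1)`-th string. -/
def sparsePos : Set ℕ := {x | ∃ k : ℕ, x = 2 ^ (2 ^ k) - 1}

/-- The class `𝕊` of subsets of `S = {0^{2^k} : k ∈ ℕ}`, viewed as infinite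
binary sequences. -/
def SparseSeq : Set (ℕ → Bool) := {X | ∀ m, X m = true → m ∈ sparsePos}

/-!
A prefix of length `n` of a sequence in `𝕊` can be `true` only at the positions `2^(2^k) - 1 < n`,
so it is determined by its values there, and there are at most `2^c` of them, where `c` counts
the `k` with `2^(2^k) ≤ n`. If the largest such `k` is `M`, then `c ≤ M + 1 ≤ 2^M`, whence
`2^c ≤ 2^(2^M) ≤ n`.
-/

-- Lists of a common length are determined by their sets of `true` positions.
theorem ncard_le_two_pow_card_of_true_mem {P : Set (List Bool)} {n : ℕ} (T : Finset ℕ)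
    (hlen : ∀ l ∈ P, l.length = n)
    (htrue : ∀ l ∈ P, ∀ i (h : i < l.length), l[i] = true → i ∈ T) :
    P.ncard ≤ 2 ^ T.card := by
  let support : List Bool → Finset ℕ := fun l => T.filter fun i => l.getD i false = true
  have hinj : Set.InjOn support P := by
    intro l₁ h₁ l₂ h₂ heq
    have htrue_iff : ∀ i (hi₁ : i < l₁.length) (hi₂ : i < l₂.length),
        l₁[i] = true ↔ l₂[i] = true := by
      intro i hi₁ hi₂
      have hmem : ∀ l (hl : l ∈ P) (hi : i < l.length), l[i] = true ↔ i ∈ support l := by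
        intro l hl hi
        simp only [support, Finset.mem_filter, List.getD_eq_getElem _ _ hi]
        exact ⟨fun h => ⟨htrue l hl i hi h, h⟩, And.right⟩
      rw [hmem l₁ h₁ hi₁, hmem l₂ h₂ hi₂, heq]
    refine List.ext_getElem (by rw [hlen _ h₁, hlen _ h₂]) fun i hi₁ hi₂ => ?_
    exact Bool.eq_iff_iff.mpr (htrue_iff i hi₁ hi₂)
  have hmaps : Set.MapsTo support P T.powerset := fun l _ =>
    Finset.mem_coe.mpr (Finset.mem_powerset.mpr (Finset.filter_subset _ _))
  have := Set.ncard_le_ncard_of_injOn support hmaps hinj T.powerset.finite_toSet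
  rwa [Set.ncard_coe_finset, Finset.card_powerset] at this

theorem two_pow_card_le_of_two_pow_two_pow_le {K : Finset ℕ} {n : ℕ}
    (hK : ∀ k ∈ K, 2 ^ 2 ^ k ≤ n) : 2 ^ K.card ≤ n + 1 := by
  rcases K.eq_empty_or_nonempty with rfl | hne
  · simp
  have hsub : K ⊆ Finset.range (K.max' hne + 1) := fun k hk =>
    Finset.mem_range_succ_iff.mpr (K.le_max' k hk)
  calc 2 ^ K.card ≤ 2 ^ (K.max' hne + 1) :=
        Nat.pow_le_pow_right two_pos (by simpa using Finset.card_le_card hsub)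
    _ ≤ 2 ^ 2 ^ K.max' hne := Nat.pow_le_pow_right two_pos Nat.lt_two_pow_self
    _ ≤ n + 1 := (hK _ (K.max'_mem hne)).trans n.le_succ

/-- For every `n`, there are at most `n + 1` binary strings of length `n` that
are prefixes of some element of `𝕊`. -/
theorem card_prefixes_sparse_le (n : ℕ) :
    Set.ncard {l : List Bool | l.length = n ∧
      ∃ X ∈ SparseSeq, ∀ i, (h : i < l.length) → X i = l.get ⟨i, h⟩}
      ≤ n + 1 := by
  let K := (Finset.range n).filter fun k => 2 ^ 2 ^ k ≤ n
  have hsparse : ∀ i < n, i ∈ sparsePos → i ∈ K.image fun k => 2 ^ 2 ^ k - 1 := by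
    rintro i hi ⟨k, rfl⟩
    have hk : k < 2 ^ k := Nat.lt_two_pow_self
    have hk' : 2 ^ k < 2 ^ 2 ^ k := Nat.lt_two_pow_self
    refine Finset.mem_image.mpr ⟨k, Finset.mem_filter.mpr ⟨?_, by omega⟩, rfl⟩
    exact Finset.mem_range.mpr (by omega)
  calc _ ≤ 2 ^ (K.image fun k => 2 ^ 2 ^ k - 1).card := by
        refine ncard_le_two_pow_card_of_true_mem _ (fun l hl => hl.1) ?_
        rintro l ⟨hlen, X, hX, hXl⟩ i hi htrue
        exact hsparse i (hlen ▸ hi) (hX i ((hXl i hi).trans htrue))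
    _ ≤ 2 ^ K.card := Nat.pow_le_pow_right two_pos Finset.card_image_le
    _ ≤ n + 1 := two_pow_card_le_of_two_pow_two_pow_le fun k hk => (Finset.mem_filter.mp hk).2
end

section
/- In the construction of the Blum speed-up set R with diagonalization threshold f^{|x|−i}(|x|): if Φ_i computes R, then time(Φ_i, x) ≥ f^{|x|−i}(|x|) for all but finitely many x with |x| ≥ i. -/
open Filter Nat.Partrec

/-!
Let `i = encode c`. If `Φ_i = R`, then `i` is never diagonalized against, since at such a stage
`R(x) = 1 - Φ_i(x)`; so `i` stays active forever. Hence at every stage `x` with `|x| ≥ i` at which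
`Φ_i(x)` halts within `f^{|x|-i}(|x|)` steps, the construction diagonalizes against some active
index `j ≤ i`, necessarily `j < i`. Each index is diagonalized against at most once, so this
happens at only finitely many stages.
-/

/-- Length of the binary string coded by `x` under the length-lexicographic
identification of strings with natural numbers. -/
def strLen (x : ℕ) : ℕ := Nat.size (x + 1) - 1

/-- Running time of the machine (code) `c` on input `x`: the least number of
steps after which the step-indexed evaluation converges. -/
noncomputable def ctime (c : Code) (x : ℕ) : ℕ :=
  sInf {s | (Code.evaln s c x).isSome}

/-- The machine `c` computes the 0-1 valued language `R`. -/
def CodeComputes (c : Code) (R : ℕ → Bool) : Prop :=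
  ∀ x, ∃ s, Code.evaln s c x = some (cond (R x) 1 0)

/-- One step of the Blum construction: on string `x`, find the least active
index `i ≤ |x|` (i.e. `i` not diagonalized at an earlier stage, as recorded in
`prev`) such that `Φ_i(x)` converges within `f^{|x|-i}(|x|)` steps. -/
def blumStep (f : ℕ → ℕ) (x : ℕ) (prev : List (Option ℕ)) : Option ℕ :=
  (List.range (strLen x + 1)).find? fun i =>
    !(prev.contains (some i)) &&
      (Code.evaln (f^[strLen x - i] (strLen x)) (Denumerable.ofNat Code i) x).isSome

/-- The list of diagonalization decisions made at stages `0, …, x - 1`. -/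
def blumDiagList (f : ℕ → ℕ) : ℕ → List (Option ℕ)
  | 0 => []
  | x + 1 => blumDiagList f x ++ [blumStep f x (blumDiagList f x)]

/-- The index (if any) diagonalized against at stage `x`. -/
def blumDiag (f : ℕ → ℕ) (x : ℕ) : Option ℕ := blumStep f x (blumDiagList f x)

/-- The Blum speed-up set `R`: at stage `x`, diagonalize against the chosen
index by outputting `1 - Φ_i(x)`; otherwise output `0`. -/
def blumR (f : ℕ → ℕ) (x : ℕ) : Bool :=
  match blumDiag f x with
  | Option.none => false
  | some i =>
    match Code.evaln (f^[strLen x - i] (strLen x)) (Denumerable.ofNat Code i) x with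
    | some v => decide (v = 0)
    | Option.none => false

lemma mem_blumDiagList {f : ℕ → ℕ} {x : ℕ} {o : Option ℕ} :
    o ∈ blumDiagList f x ↔ ∃ y < x, blumDiag f y = o := by
  induction x with
  | zero => simp [blumDiagList]
  | succ x ih =>
    rw [blumDiagList, ← blumDiag]
    simp only [List.mem_append, ih, List.mem_singleton, Nat.lt_succ_iff_lt_or_eq]
    aesop

lemma blumDiag_eq_some_iff {f : ℕ → ℕ} {x i : ℕ} :
    blumDiag f x = some i ↔
      i ≤ strLen x ∧ (∀ y < x, blumDiag f y ≠ some i) ∧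
        (Code.evaln (f^[strLen x - i] (strLen x)) (Denumerable.ofNat Code i) x).isSome ∧
        ∀ j < i, (∃ y < x, blumDiag f y = some j) ∨
          ¬(Code.evaln (f^[strLen x - j] (strLen x)) (Denumerable.ofNat Code j) x).isSome := by
  rw [blumDiag, blumStep, List.find?_range_eq_some]
  simp only [List.contains_eq_mem, mem_blumDiagList, List.mem_range, Nat.lt_succ_iff,
    Bool.and_eq_true, Bool.not_eq_true', decide_eq_false_iff_not, Bool.not_and,
    Bool.or_eq_true, Bool.not_not, decide_eq_true_eq, not_exists, not_and, Bool.not_eq_true]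
  tauto

lemma blumDiag_injOn (f : ℕ → ℕ) : Set.InjOn (blumDiag f) {x | (blumDiag f x).isSome} := by
  intro x _ y hy hxy
  obtain ⟨i, hyi⟩ := Option.isSome_iff_exists.mp hy
  have hxi := hxy.trans hyi
  by_contra hne
  rcases Nat.lt_or_gt_of_ne hne with hlt | hlt
  · exact (blumDiag_eq_some_iff.mp hyi).2.1 x hlt hxi
  · exact (blumDiag_eq_some_iff.mp hxi).2.1 y hlt hyi

lemma finite_setOf_blumDiag_lt (f : ℕ → ℕ) (n : ℕ) :
    {x | ∃ j < n, blumDiag f x = some j}.Finite := by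
  have hpre : {x | ∃ j < n, blumDiag f x = some j} = blumDiag f ⁻¹' (some '' Set.Iio n) := by
    ext x
    simp [eq_comm]
  rw [hpre]
  refine ((Set.finite_Iio n).image some).preimage ((blumDiag_injOn f).mono ?_)
  rintro x ⟨j, -, hj⟩
  simp [← hj]

lemma blumR_of_blumDiag_eq_some {f : ℕ → ℕ} {x i v : ℕ} (hd : blumDiag f x = some i)
    (hv : Code.evaln (f^[strLen x - i] (strLen x)) (Denumerable.ofNat Code i) x = some v) :
    blumR f x = decide (v = 0) := by
  simp [blumR, hd, hv]

lemma blumDiag_ne_some_encode {f : ℕ → ℕ} {c : Code} (h : CodeComputes c (blumR f)) (x : ℕ) :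
    blumDiag f x ≠ some (Encodable.encode c) := by
  intro hd
  obtain ⟨-, -, hconv, -⟩ := blumDiag_eq_some_iff.mp hd
  obtain ⟨v, hv⟩ := Option.isSome_iff_exists.mp hconv
  obtain ⟨s, hs⟩ := h x
  have hvc : Code.evaln (f^[strLen x - Encodable.encode c] (strLen x)) c x = some v := by
    rwa [Denumerable.ofNat_encode] at hv
  have hvR : v = cond (blumR f x) 1 0 :=
    Part.mem_unique (Code.evaln_sound hvc) (Code.evaln_sound hs)
  rw [blumR_of_blumDiag_eq_some hd hv] at hvR
  rcases v with _ | v <;> simp at hvR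

lemma CodeComputes.evaln_isSome_of_ctime_le {c : Code} {R : ℕ → Bool} (h : CodeComputes c R)
    {x s : ℕ} (hs : ctime c x ≤ s) : (Code.evaln s c x).isSome := by
  have hne : {s | (Code.evaln s c x).isSome}.Nonempty :=
    let ⟨s, hs⟩ := h x
    ⟨s, by simp [hs]⟩
  obtain ⟨v, hv⟩ := Option.isSome_iff_exists.mp (Nat.sInf_mem hne)
  exact Option.isSome_iff_exists.mpr ⟨v, Code.evaln_mono hs hv⟩

lemma blumDiag_lt_encode_of_ctime_lt {f : ℕ → ℕ} {c : Code} (h : CodeComputes c (blumR f))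
    {x : ℕ} (hlen : Encodable.encode c ≤ strLen x)
    (htime : ctime c x < f^[strLen x - Encodable.encode c] (strLen x)) :
    ∃ j < Encodable.encode c, blumDiag f x = some j := by
  have hconv := h.evaln_isSome_of_ctime_le htime.le
  have hsome : (blumDiag f x).isSome := by
    rw [blumDiag, blumStep, List.find?_isSome]
    refine ⟨Encodable.encode c, List.mem_range.mpr (Nat.lt_succ_of_le hlen), ?_⟩
    simp [mem_blumDiagList, blumDiag_ne_some_encode h, hconv]
  obtain ⟨j, hj⟩ := Option.isSome_iff_exists.mp hsome
  refine ⟨j, lt_of_not_ge fun hle => ?_, hj⟩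
  rcases hle.lt_or_eq with hlt | rfl
  · obtain ⟨-, -, -, hminimal⟩ := blumDiag_eq_some_iff.mp hj
    rcases hminimal _ hlt with ⟨y, -, hy⟩ | hdiv
    · exact blumDiag_ne_some_encode h y hy
    · exact hdiv (by rwa [Denumerable.ofNat_encode])
  · exact blumDiag_ne_some_encode h x hj

/-- Key property of the Blum construction with thresholds `f^{|x|-i}(|x|)`:
if `Φ_i` computes `R`, then `time(Φ_i, x) ≥ f^{|x|-i}(|x|)` for all but
finitely many `x` with `|x| ≥ i`. -/
theorem blum_time_lower_bound (f : ℕ → ℕ) (c : Code)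
    (h : CodeComputes c (blumR f)) :
    ∀ᶠ x in atTop, Encodable.encode c ≤ strLen x →
      f^[strLen x - Encodable.encode c] (strLen x) ≤ ctime c x := by
  rw [← Nat.cofinite_eq_atTop]
  filter_upwards [(finite_setOf_blumDiag_lt f (Encodable.encode c)).eventually_cofinite_notMem]
    with x hx hlen
  by_contra! htime
  exact hx (blumDiag_lt_encode_of_ctime_lt h hlen htime)
end
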